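/- arXiv:1302.5789 — 7 statements merged into one kernel-verified Lean document; each statement's English description precedes it below -/
import Mathlib

section
/- Every measure definite kernel is a negative definite kernel; that is, if f(x,y) = μ(S_x △ S_y) for some measure space (Ω,𝓑,μ) and measurable sets S_x indexed by x ∈ Γ, then for every finite collection x_1,…,x_n ∈ Γ and real numbers c_1,…,c_n with ∑ c_i = 0, we have ∑_{i,j} c_i c_j f(x_i,x_j) ≤ 0. -/
/-!
Writing `1_A` for the real indicator of `A`, one has `1_{A ∆ B} = (1_A - 1_B)²` pointwise, and for
weights with `∑ cᵢ = 0` the quadratic form `∑ᵢⱼ cᵢ cⱼ (aᵢ - aⱼ)²` equals `-2 (∑ᵢ cᵢ aᵢ)²`.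
Hence `∑ᵢⱼ cᵢ cⱼ 1_{Sᵢ ∆ Sⱼ}` is a nonpositive function, and integrating it against `μ` gives
`∑ᵢⱼ cᵢ cⱼ μ(Sᵢ ∆ Sⱼ) ≤ 0`; the sets `Sᵢ ∆ Sⱼ` have finite measure, so the integral splits.
-/

open MeasureTheory
open scoped symmDiff

theorem Finset.sum_sum_mul_mul_sub_sq_of_sum_eq_zero {ι : Type*} [Fintype ι] {c : ι → ℝ}
    (hc : ∑ i, c i = 0) (a : ι → ℝ) :
    ∑ i, ∑ j, c i * c j * (a i - a j) ^ 2 = -2 * (∑ i, c i * a i) ^ 2 := by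
  have expand : ∀ i j, c i * c j * (a i - a j) ^ 2 =
      c i * a i ^ 2 * c j + c i * (c j * a j ^ 2) - 2 * (c i * a i * (c j * a j)) := by
    intros; ring
  simp only [expand, Finset.sum_add_distrib, Finset.sum_sub_distrib, ← Finset.sum_mul,
    ← Finset.mul_sum, hc]
  ring

theorem Set.indicator_symmDiff_one_eq_sq_sub {α : Type*} (s t : Set α) (x : α) :
    (s ∆ t).indicator (1 : α → ℝ) x = (s.indicator 1 x - t.indicator 1 x) ^ 2 := by
  by_cases hs : x ∈ s <;> by_cases ht : x ∈ t <;> simp [Set.mem_symmDiff, hs, ht]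

theorem sum_sum_mul_mul_indicator_symmDiff_nonpos {ι α : Type*} [Fintype ι] {c : ι → ℝ}
    (hc : ∑ i, c i = 0) (s : ι → Set α) (x : α) :
    ∑ i, ∑ j, c i * c j * (s i ∆ s j).indicator (1 : α → ℝ) x ≤ 0 := by
  simp only [Set.indicator_symmDiff_one_eq_sq_sub,
    Finset.sum_sum_mul_mul_sub_sq_of_sum_eq_zero hc]
  nlinarith [sq_nonneg (∑ i, c i * (s i).indicator (1 : α → ℝ) x)]

theorem sum_sum_mul_mul_measureReal_symmDiff_nonpos {ι Ω : Type*} [Fintype ι]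
    [MeasurableSpace Ω] (μ : Measure Ω) {s : ι → Set Ω} (hs : ∀ i, MeasurableSet (s i))
    (hfin : ∀ i j, μ (s i ∆ s j) ≠ ⊤) {c : ι → ℝ} (hc : ∑ i, c i = 0) :
    ∑ i, ∑ j, c i * c j * μ.real (s i ∆ s j) ≤ 0 := by
  have hmeas : ∀ i j, MeasurableSet (s i ∆ s j) := fun i j => (hs i).symmDiff (hs j)
  have hint : ∀ i j, Integrable (fun x => c i * c j * (s i ∆ s j).indicator (1 : Ω → ℝ) x) μ :=
    fun i j => ((integrable_indicator_iff (hmeas i j)).2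
      (integrableOn_const (hfin i j))).const_mul _
  calc ∑ i, ∑ j, c i * c j * μ.real (s i ∆ s j)
      = ∫ x, ∑ i, ∑ j, c i * c j * (s i ∆ s j).indicator (1 : Ω → ℝ) x ∂μ := by
        rw [integral_finsetSum _ fun i _ => integrable_finsetSum _ fun j _ => hint i j]
        refine Finset.sum_congr rfl fun i _ => ?_
        rw [integral_finsetSum _ fun j _ => hint i j]
        refine Finset.sum_congr rfl fun j _ => ?_
        rw [integral_const_mul, integral_indicator_one (hmeas i j)]
    _ ≤ 0 := integral_nonpos fun x => sum_sum_mul_mul_indicator_symmDiff_nonpos hc s x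

theorem measure_definite_is_negative_definite_general {Γ : Type*} (f : Γ → Γ → ℝ)
    (hf0 : ∀ x y, 0 ≤ f x y)
    (hmd : ∃ (Ω : Type) (_ : MeasurableSpace Ω) (μ : Measure Ω) (S : Γ → Set Ω),
      (∀ x, MeasurableSet (S x)) ∧ ∀ x y, μ (S x ∆ S y) = ENNReal.ofReal (f x y)) :
    ∀ (n : ℕ) (x : Fin n → Γ) (c : Fin n → ℝ), (∑ i, c i = 0) →
      ∑ i, ∑ j, c i * c j * f (x i) (x j) ≤ 0 := by
  obtain ⟨Ω, _, μ, S, hS, hμ⟩ := hmd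
  intro n x c hc
  have hf : ∀ y z, f y z = μ.real (S y ∆ S z) := fun y z => by
    rw [measureReal_def, hμ, ENNReal.toReal_ofReal (hf0 y z)]
  simp only [hf]
  exact sum_sum_mul_mul_measureReal_symmDiff_nonpos μ (fun i => hS (x i))
    (fun i j => by rw [hμ]; exact ENNReal.ofReal_ne_top) hc

/-- Every measure definite kernel is negative definite. -/
theorem measure_definite_is_negative_definite {Γ : Type*} [Countable Γ] (f : Γ → Γ → ℝ)
    (hf0 : ∀ x y, 0 ≤ f x y)
    (hmd : ∃ (Ω : Type) (_ : MeasurableSpace Ω) (μ : Measure Ω) (S : Γ → Set Ω),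
      (∀ x, MeasurableSet (S x)) ∧ ∀ x y, μ (S x ∆ S y) = ENNReal.ofReal (f x y)) :
    ∀ (n : ℕ) (x : Fin n → Γ) (c : Fin n → ℝ), (∑ i, c i = 0) →
      ∑ i, ∑ j, c i * c j * f (x i) (x j) ≤ 0 :=
  measure_definite_is_negative_definite_general f hf0 hmd
end

section
/- If f is a measure definite kernel on Γ witnessed by sets S_x in a measure space (Ω,μ), then there exists a measure space (Ω',μ') and sets S'_x such that f(x,y) = μ'(S'_x \ S'_y) = μ'(S'_y \ S'_x) for all x,y ∈ Γ. -/
/-!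
Adding to a measure its image under an involution that complements every set `A x` turns
`ν (A x \ A y)` into `ν (A x ∆ A y)`, which is symmetric in `x` and `y`; this is the doubling
`Ω × {0,1}` with `S'_x = S_x × {0} ∪ S_xᶜ × {1}`. Since the realizing space has to live in an
arbitrary universe, the construction is carried out on the Cantor space `ℕ → Bool` (lifted to that
universe), with involution coordinatewise negation: `μ` is pushed forward along the coding map
`ω ↦ (n ↦ [ω ∈ S (e⁻¹ n)])` for an injection `e : Γ → ℕ`.
-/

open MeasureTheory
open scoped symmDiff

lemma MeasureTheory.Measure.add_map_apply_diff_of_preimage_eq_compl {α : Type*}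
    [MeasurableSpace α] (ν : Measure α) {σ : α → α} (hσ : Measurable σ) {A B : Set α}
    (hA : MeasurableSet A) (hB : MeasurableSet B) (hσA : σ ⁻¹' A = Aᶜ) (hσB : σ ⁻¹' B = Bᶜ) :
    (ν + ν.map σ) (A \ B) = ν (A ∆ B) := by
  rw [Measure.add_apply, Measure.map_apply hσ (hA.diff hB), Set.preimage_sdiff, hσA, hσB,
    compl_sdiff_compl, Set.symmDiff_def, measure_union disjoint_sdiff_sdiff (hB.diff hA)]

section CantorCode

variable {Γ Ω : Type*}

open Classical in
noncomputable def cantorCode (e : Γ → ℕ) (S : Γ → Set Ω) (ω : Ω) : ℕ → Bool :=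
  fun n => decide (ω ∈ ⋃ x ∈ e ⁻¹' {n}, S x)

lemma cantorCode_apply_eq_true {e : Γ → ℕ} (he : Function.Injective e) (S : Γ → Set Ω)
    (ω : Ω) (x : Γ) : cantorCode e S ω (e x) = true ↔ ω ∈ S x := by
  simp [cantorCode, he.eq_iff]

lemma measurable_cantorCode [Countable Γ] [MeasurableSpace Ω] (e : Γ → ℕ) {S : Γ → Set Ω}
    (hS : ∀ x, MeasurableSet (S x)) : Measurable (cantorCode e S) := by
  refine measurable_pi_lambda _ fun n => measurable_to_bool ?_
  have : (fun ω => cantorCode e S ω n) ⁻¹' {true} = ⋃ x ∈ e ⁻¹' {n}, S x := by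
    ext ω
    simp [cantorCode]
  rw [this]
  exact MeasurableSet.biUnion (Set.to_countable _) fun x _ => hS x

end CantorCode

/-- A measure definite kernel can be realized so that
`f(x,y) = μ'(S'_x \ S'_y) = μ'(S'_y \ S'_x)`. -/
theorem measure_definite_symmetric_realization {Γ : Type*} [Countable Γ]
    (Ω : Type*) [MeasurableSpace Ω] (μ : Measure Ω) (S : Γ → Set Ω)
    (hS : ∀ x, MeasurableSet (S x)) :
    ∃ (Ω' : Type*) (_ : MeasurableSpace Ω') (μ' : Measure Ω') (S' : Γ → Set Ω'),
      (∀ x, MeasurableSet (S' x)) ∧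
      ∀ x y, μ' (S' x \ S' y) = μ (S x ∆ S y) ∧ μ' (S' y \ S' x) = μ (S x ∆ S y) := by
  obtain ⟨e, he⟩ := Countable.exists_injective_nat Γ
  let φ : Ω → ULift (ℕ → Bool) := fun ω => ⟨cantorCode e S ω⟩
  let σ : ULift (ℕ → Bool) → ULift (ℕ → Bool) := fun c => ⟨fun n => !c.down n⟩
  let S' : Γ → Set (ULift (ℕ → Bool)) := fun x => {c | c.down (e x) = true}
  have hφ : Measurable φ :=
    MeasurableEquiv.ulift.symm.measurable.comp (measurable_cantorCode e hS)
  have hS' : ∀ x, MeasurableSet (S' x) := fun x =>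
    (by fun_prop : Measurable fun c : ULift (ℕ → Bool) => c.down (e x))
      (measurableSet_singleton true)
  have hφS' : ∀ x, φ ⁻¹' S' x = S x := fun x => by
    ext ω
    exact cantorCode_apply_eq_true he S ω x
  have key : ∀ x y, (μ.map φ + (μ.map φ).map σ) (S' x \ S' y) = μ (S x ∆ S y) := by
    intro x y
    rw [Measure.add_map_apply_diff_of_preimage_eq_compl _ (by fun_prop) (hS' x) (hS' y)
        (by ext; simp [σ, S']) (by ext; simp [σ, S']),
      Measure.map_apply hφ ((hS' x).symmDiff (hS' y)), Set.preimage_symmDiff, hφS', hφS']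
  exact ⟨_, _, _, S', hS', fun x y => ⟨key x y, by rw [key, symmDiff_comm]⟩⟩
end

section
/- Every measure definite kernel on a countable set Γ can be realized on the universal space: there exists a regular Borel measure μ₀ on Ω₀ = {0,1}^Γ \ {constant 0, constant 1} such that f(x,y) = μ₀(S⁰_x △ S⁰_y) for all x,y ∈ Γ, where S⁰_x = {c ∈ Ω₀ : c(x) = 1}. -/
open MeasureTheory
open scoped symmDiff

/-- The universal space `Ω₀ = {0,1}^Γ` minus the two constant functions. -/
abbrev Omega0 (Γ : Type*) : Type _ :=
  {c : Γ → Bool // (∃ x, c x = true) ∧ (∃ x, c x = false)}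

noncomputable instance (Γ : Type*) : MeasurableSpace (Omega0 Γ) := borel _

instance (Γ : Type*) : BorelSpace (Omega0 Γ) := ⟨rfl⟩

/-- `S⁰_x = {c ∈ Ω₀ : c(x) = 1}`. -/
def S0 {Γ : Type*} (x : Γ) : Set (Omega0 Γ) := {c | c.1 x = true}

/-!
Code each point `ω ∈ Ω` by the indicator `x ↦ [ω ∈ S x]` in `{0,1}^Γ` and push `μ` forward.
The code of `ω` lands in `S⁰_x △ S⁰_y` exactly when `ω ∈ S_x △ S_y`, and codes in that set are
never constant, so discarding the constant codes loses nothing and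
`μ₀(S⁰_x △ S⁰_y) = μ(S_x △ S_y) = f(x,y)`. Regularity is automatic: `Ω₀` is an open subset of
the compact metrizable space `{0,1}^Γ`, and every `c ∈ Ω₀` has the neighbourhood `S⁰_x \ S⁰_y`
(with `c x = 1`, `c y = 0`) of finite measure, so `μ₀` is locally finite.
-/

open Topology
open scoped ENNReal

namespace Omega0

variable {Γ : Type*}

theorem isOpen_setOf_nonconstant :
    IsOpen {c : Γ → Bool | (∃ x, c x = true) ∧ (∃ x, c x = false)} := by
  have hopen (b : Bool) : IsOpen {c : Γ → Bool | ∃ x, c x = b} := by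
    rw [Set.ofPred_exists]
    exact isOpen_iUnion fun x =>
      (isOpen_discrete {b}).preimage (continuous_apply (A := fun _ : Γ => Bool) x)
  exact (hopen true).inter (hopen false)

theorem isOpenEmbedding_val : IsOpenEmbedding (Subtype.val : Omega0 Γ → Γ → Bool) :=
  isOpen_setOf_nonconstant.isOpenEmbedding_subtypeVal

theorem measurableEmbedding_val [Countable Γ] :
    MeasurableEmbedding (Subtype.val : Omega0 Γ → Γ → Bool) :=
  isOpenEmbedding_val.measurableEmbedding

instance : LocallyCompactSpace (Omega0 Γ) := isOpenEmbedding_val.locallyCompactSpace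

instance [Countable Γ] : SecondCountableTopology (Omega0 Γ) :=
  isOpenEmbedding_val.isEmbedding.secondCountableTopology

instance [Countable Γ] : TopologicalSpace.PseudoMetrizableSpace (Omega0 Γ) :=
  isOpenEmbedding_val.isInducing.pseudoMetrizableSpace

theorem isClopen_S0 (x : Γ) : IsClopen (S0 x : Set (Omega0 Γ)) :=
  (isClopen_discrete {true}).preimage ((continuous_apply x).comp continuous_subtype_val)

theorem measurableSet_S0 (x : Γ) : MeasurableSet (S0 x : Set (Omega0 Γ)) :=
  (isClopen_S0 x).isOpen.measurableSet

theorem image_val_S0_symmDiff (x y : Γ) :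
    Subtype.val '' (S0 x ∆ S0 y : Set (Omega0 Γ)) = {c | c x ≠ c y} := by
  ext c
  constructor
  · rintro ⟨c, hc, rfl⟩
    rcases Set.mem_symmDiff.1 hc with ⟨hx, hy⟩ | ⟨hy, hx⟩ <;> simp_all [S0]
  · intro (hc : c x ≠ c y)
    cases hx : c x <;> cases hy : c y <;> rw [hx, hy] at hc <;> simp at hc
    · exact ⟨⟨c, ⟨y, hy⟩, ⟨x, hx⟩⟩, Set.mem_symmDiff.2 (.inr ⟨hy, by simp [S0, hx]⟩), rfl⟩
    · exact ⟨⟨c, ⟨x, hx⟩, ⟨y, hy⟩⟩, Set.mem_symmDiff.2 (.inl ⟨hx, by simp [S0, hy]⟩), rfl⟩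

theorem isLocallyFiniteMeasure_of_measure_S0_symmDiff_ne_top (ν : Measure (Omega0 Γ))
    (h : ∀ x y, ν (S0 x ∆ S0 y) ≠ ∞) : IsLocallyFiniteMeasure ν := by
  refine ⟨fun c => ?_⟩
  obtain ⟨⟨x, hx⟩, ⟨y, hy⟩⟩ := c.2
  have hc : c ∈ S0 x \ S0 y := ⟨hx, by simp [S0, hy]⟩
  exact ⟨S0 x \ S0 y, ((isClopen_S0 x).isOpen.sdiff (isClopen_S0 y).isClosed).mem_nhds hc,
    (measure_mono (le_sup_left : S0 x \ S0 y ≤ S0 x ∆ S0 y)).trans_lt (h x y).lt_top⟩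

theorem regular_of_measure_S0_symmDiff_ne_top [Countable Γ] (ν : Measure (Omega0 Γ))
    (h : ∀ x y, ν (S0 x ∆ S0 y) ≠ ∞) : ν.Regular :=
  have := isLocallyFiniteMeasure_of_measure_S0_symmDiff_ne_top ν h
  inferInstance

variable {Ω : Type*} {S : Γ → Set Ω}

open scoped Classical in
noncomputable def code (S : Γ → Set Ω) (ω : Ω) : Γ → Bool := fun x => decide (ω ∈ S x)

theorem measurable_code [MeasurableSpace Ω] (hS : ∀ x, MeasurableSet (S x)) :
    Measurable (code S) :=
  measurable_pi_lambda _ fun x => measurable_to_bool (by convert hS x; ext; simp [code])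

theorem code_preimage_setOf_ne (x y : Γ) : code S ⁻¹' {c | c x ≠ c y} = S x ∆ S y := by
  ext ω
  by_cases hx : ω ∈ S x <;> by_cases hy : ω ∈ S y <;> simp [code, Set.mem_symmDiff, hx, hy]

noncomputable def realize [MeasurableSpace Ω] (μ : Measure Ω) (S : Γ → Set Ω) :
    Measure (Omega0 Γ) :=
  (μ.map (code S)).comap Subtype.val

theorem realize_S0_symmDiff [Countable Γ] [MeasurableSpace Ω] (μ : Measure Ω)
    (hS : ∀ x, MeasurableSet (S x)) (x y : Γ) :
    realize μ S (S0 x ∆ S0 y) = μ (S x ∆ S y) := by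
  rw [realize, measurableEmbedding_val.comap_apply, image_val_S0_symmDiff,
    Measure.map_apply (measurable_code hS), code_preimage_setOf_ne]
  exact (measurableSet_eq_fun (measurable_pi_apply x) (measurable_pi_apply y)).compl

end Omega0

/-- Every measure definite kernel on a countable set is realized by a
regular Borel measure on the universal space `Ω₀`. -/
theorem measure_definite_universal_realization {Γ : Type*} [Countable Γ]
    (f : Γ → Γ → ℝ)
    (Ω : Type*) [MeasurableSpace Ω] (μ : Measure Ω) (S : Γ → Set Ω)
    (hS : ∀ x, MeasurableSet (S x))
    (hf : ∀ x y, μ (S x ∆ S y) = ENNReal.ofReal (f x y)) :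
    ∃ μ₀ : Measure (Omega0 Γ), μ₀.Regular ∧
      ∀ x y, μ₀ (S0 x ∆ S0 y) = ENNReal.ofReal (f x y) := by
  have hrealize : ∀ x y, Omega0.realize μ S (S0 x ∆ S0 y) = ENNReal.ofReal (f x y) :=
    fun x y => (Omega0.realize_S0_symmDiff μ hS x y).trans (hf x y)
  refine ⟨Omega0.realize μ S, ?_, hrealize⟩
  exact Omega0.regular_of_measure_S0_symmDiff_ne_top _ fun x y =>
    hrealize x y ▸ ENNReal.ofReal_ne_top
end

section
/- The class of measure definite kernels on a countable set Γ is closed under pointwise convergence: if each f_j is measure definite and f_j(x,y) → f(x,y) for all x,y ∈ Γ, then f is measure definite. -/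
open MeasureTheory
open scoped symmDiff

/-- A kernel is measure definite if it arises as `μ(S_x ∆ S_y)`. -/
def IsMeasureDefinite {Γ : Type*} (f : Γ → Γ → ℝ) : Prop :=
  (∀ x y, 0 ≤ f x y) ∧
  ∃ (Ω : Type) (_ : MeasurableSpace Ω) (μ : Measure Ω) (S : Γ → Set Ω),
    (∀ x, MeasurableSet (S x)) ∧ ∀ x y, μ (S x ∆ S y) = ENNReal.ofReal (f x y)


/-!
Enumerate `Γ` as `g : ℕ → Γ` and push each realisation `(Ω, μ, S)` of `f j` forward to the Cantor
space `ℕ → Bool` along `ω ↦ (ω ∈ S (g n) ∆ S (g 0))ₙ`. This gives measures `ν j` with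
`ν j (Cₘ ∆ Cₙ) = f j (g m) (g n)` and `ν j Cₙ = f j (g n) (g 0)`, where `Cₙ` is the set where the
`n`-th coordinate is `true`. The `ν j` need not be finite, but on each piece `Cₙ \ ⋃_{k<n} Cₖ`
their mass is bounded by the convergent sequence `f j (g n) (g 0)`. Finite measures of bounded mass
on a compact space form a compact set (Prokhorov), so the restrictions converge weakly along an
ultrafilter, and weak convergence gives convergence on clopen sets. A clopen set avoiding
the zero sequence is compact, hence meets only finitely many pieces, so summing the limits yields
a measure `μ` with `μ (Cₘ ∆ Cₙ) = lim ν j (Cₘ ∆ Cₙ) = f₀ (g m) (g n)`.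
-/

open Filter Topology Set
open scoped ENNReal NNReal

theorem MeasureTheory.FiniteMeasure.tendsto_measure_of_isClopen_of_tendsto {Ω ι : Type*}
    {L : Filter ι} [MeasurableSpace Ω] [TopologicalSpace Ω] [OpensMeasurableSpace Ω]
    {μ : FiniteMeasure Ω} {μs : ι → FiniteMeasure Ω} (hμs : Tendsto μs L (𝓝 μ))
    {B : Set Ω} (hB : IsClopen B) :
    Tendsto (fun i ↦ (μs i : Measure Ω) B) L (𝓝 ((μ : Measure Ω) B)) := by
  have h := FiniteMeasure.tendsto_iff_forall_integral_tendsto.1 hμs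
    (BoundedContinuousFunction.indicator B hB)
  simp only [BoundedContinuousFunction.indicator_apply,
    integral_indicator_one hB.isOpen.measurableSet] at h
  simpa only [Measure.real, ENNReal.ofReal_toReal, ne_eq, measure_ne_top, not_false_eq_true]
    using ENNReal.tendsto_ofReal h

theorem IsCompact.exists_inter_disjointed_eq_empty {X : Type*} [TopologicalSpace X] {B : Set X}
    (hB : IsCompact B) {C : ℕ → Set X} (hC : ∀ n, IsOpen (C n)) (hBC : B ⊆ ⋃ n, C n) :
    ∃ N, ∀ n, N ≤ n → B ∩ disjointed C n = ∅ := by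
  obtain ⟨t, ht⟩ := hB.elim_finite_subcover C hC hBC
  obtain ⟨N, htN⟩ := t.exists_nat_subset_range
  refine ⟨N, fun n hn ↦ eq_empty_of_forall_notMem fun x ⟨hxB, hxD⟩ ↦ ?_⟩
  obtain ⟨i, hi, hxi⟩ := mem_iUnion₂.1 (ht hxB)
  rw [disjointed_eq_inter_compl] at hxD
  exact mem_iInter₂.1 hxD.2 i ((Finset.mem_range.1 (htN hi)).trans_le hn) hxi

section CompactSpace

variable {X ι : Type*} [TopologicalSpace X] [CompactSpace X] [T2Space X] [MeasurableSpace X]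
  [BorelSpace X]

theorem exists_forall_isClopen_tendsto_measure_of_le (U : Ultrafilter ι) (ν : ι → Measure X)
    (c : ℝ≥0) (hν : ∀ i, ν i univ ≤ c) :
    ∃ μ : Measure X, ∀ B, IsClopen B → Tendsto (fun i ↦ ν i B) U (𝓝 (μ B)) := by
  have hfin (i : ι) : IsFiniteMeasure (ν i) := ⟨(hν i).trans_lt ENNReal.coe_lt_top⟩
  let ρ (i : ι) : FiniteMeasure X := ⟨ν i, hfin i⟩
  have hρ : ∀ i, ρ i ∈ {μ : FiniteMeasure X | μ.mass ≤ c} := fun i ↦ by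
    rw [mem_ofPred_eq, ← ENNReal.coe_le_coe, FiniteMeasure.ennreal_mass]
    exact hν i
  obtain ⟨μ, -, hμ⟩ :=
    (isCompact_setOfPred_finiteMeasure_le_of_compactSpace X c).ultrafilter_le_nhds (U.map ρ)
      (le_principal_iff.2 (mem_map.2 (univ_mem' hρ)))
  exact ⟨μ, fun B hB ↦ FiniteMeasure.tendsto_measure_of_isClopen_of_tendsto hμ hB⟩

theorem exists_forall_isClopen_tendsto_measure_of_subset_iUnion (U : Ultrafilter ι)
    (ν : ι → Measure X) {C : ℕ → Set X} (hC : ∀ n, IsOpen (C n))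
    (hν : ∀ n, ∃ c : ℝ≥0, ∀ i, ν i (C n) ≤ c) :
    ∃ μ : Measure X, ∀ B, IsClopen B → B ⊆ ⋃ n, C n → Tendsto (fun i ↦ ν i B) U (𝓝 (μ B)) := by
  have hD : ∀ n, MeasurableSet (disjointed C n) :=
    MeasurableSet.disjointed fun n ↦ (hC n).measurableSet
  have hpiece (n : ℕ) : ∃ μ : Measure X,
      ∀ B, IsClopen B → Tendsto (fun i ↦ ν i (B ∩ disjointed C n)) U (𝓝 (μ B)) := by
    obtain ⟨c, hc⟩ := hν n
    obtain ⟨μ, hμ⟩ := exists_forall_isClopen_tendsto_measure_of_le U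
      (fun i ↦ (ν i).restrict (disjointed C n)) c fun i ↦ by
        rw [Measure.restrict_apply_univ]
        exact (measure_mono (disjointed_subset C n)).trans (hc i)
    refine ⟨μ, fun B hB ↦ ?_⟩
    simpa only [Measure.restrict_apply hB.isOpen.measurableSet] using hμ B hB
  choose μ hμ using hpiece
  refine ⟨Measure.sum μ, fun B hB hBC ↦ ?_⟩
  obtain ⟨N, hN⟩ := hB.isClosed.isCompact.exists_inter_disjointed_eq_empty hC hBC
  have hνB (i : ι) : ν i B = ∑ n ∈ Finset.range N, ν i (B ∩ disjointed C n) := by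
    have hB_eq : B = ⋃ n, B ∩ disjointed C n := by
      rw [← inter_iUnion, iUnion_disjointed, inter_eq_left.2 hBC]
    conv_lhs => rw [hB_eq]
    rw [measure_iUnion (fun m n hmn ↦ ((disjoint_disjointed C hmn).mono inter_subset_right
      inter_subset_right)) fun n ↦ hB.isOpen.measurableSet.inter (hD n)]
    refine tsum_eq_sum fun n hn ↦ ?_
    rw [hN n (not_lt.1 (Finset.mem_range.not.1 hn)), measure_empty]
  have hμB : Measure.sum μ B = ∑ n ∈ Finset.range N, μ n B := by
    rw [Measure.sum_apply _ hB.isOpen.measurableSet]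
    refine tsum_eq_sum fun n hn ↦ tendsto_nhds_unique (hμ n B hB) ?_
    simp only [hN n (not_lt.1 (Finset.mem_range.not.1 hn)), measure_empty, tendsto_const_nhds]
  simp only [hνB, hμB]
  exact tendsto_finsetSum _ fun n _ ↦ hμ n B hB

end CompactSpace

theorem isClopen_setOfPred_apply_eq {ι Y : Type*} [TopologicalSpace Y] [DiscreteTopology Y]
    (i : ι) (b : Y) : IsClopen {ω : ι → Y | ω i = b} :=
  (isClopen_discrete {b}).preimage (continuous_apply i)

theorem IsClopen.symmDiff {X : Type*} [TopologicalSpace X] {s t : Set X} (hs : IsClopen s)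
    (ht : IsClopen t) : IsClopen (s ∆ t) :=
  (hs.diff ht).union (ht.diff hs)

theorem IsMeasureDefinite.exists_measure_pi_bool {ι Γ : Type*} {f : Γ → Γ → ℝ}
    (hf : IsMeasureDefinite f) (g : ι → Γ) (x₀ : Γ) :
    ∃ ν : Measure (ι → Bool),
      (∀ m n, ν ({ω | ω m = true} ∆ {ω | ω n = true}) = ENNReal.ofReal (f (g m) (g n))) ∧
      ∀ n, ν {ω | ω n = true} = ENNReal.ofReal (f (g n) x₀) := by
  classical
  obtain ⟨-, Ω, _, μ, S, hS, hμS⟩ := hf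
  have hT (n : ι) : MeasurableSet (S (g n) ∆ S x₀) := (hS _).symmDiff (hS x₀)
  let φ (ω : Ω) (n : ι) : Bool := decide (ω ∈ S (g n) ∆ S x₀)
  have hφ : Measurable φ :=
    measurable_pi_lambda _ fun n ↦ measurable_to_bool (by simpa [φ, preimage] using hT n)
  have hpre (n : ι) : φ ⁻¹' {ω | ω n = true} = S (g n) ∆ S x₀ := by ext; simp [φ]
  have hmeas (n : ι) : MeasurableSet {ω : ι → Bool | ω n = true} :=
    measurableSet_eq_fun (measurable_pi_apply n) measurable_const
  refine ⟨μ.map φ, fun m n ↦ ?_, fun n ↦ ?_⟩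
  · rw [Measure.map_apply hφ ((hmeas m).symmDiff (hmeas n)), preimage_symmDiff, hpre, hpre,
      symmDiff_symmDiff_symmDiff_comm, symmDiff_self, symmDiff_bot, hμS]
  · rw [Measure.map_apply hφ (hmeas n), hpre, hμS]

/-- Measure definite kernels on a countable set are closed under
pointwise convergence. -/
theorem measure_definite_closed_under_pointwise_limits {Γ : Type*} [Countable Γ]
    (f : ℕ → Γ → Γ → ℝ) (f₀ : Γ → Γ → ℝ)
    (hmd : ∀ j, IsMeasureDefinite (f j))
    (hconv : ∀ x y, Filter.Tendsto (fun j => f j x y) Filter.atTop (nhds (f₀ x y))) :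
    IsMeasureDefinite f₀ := by
  refine ⟨fun x y ↦ ge_of_tendsto' (hconv x y) fun j ↦ (hmd j).1 x y, ?_⟩
  rcases isEmpty_or_nonempty Γ with hΓ | hΓ
  · exact ⟨PUnit, ⊤, 0, fun _ ↦ ∅, isEmptyElim, isEmptyElim⟩
  obtain ⟨g, hg⟩ := exists_surjective_nat Γ
  choose ν hν hν₀ using fun j ↦ (hmd j).exists_measure_pi_bool g (g 0)
  have hbdd (n : ℕ) : ∃ c : ℝ≥0, ∀ j, ν j {ω | ω n = true} ≤ c := by
    obtain ⟨M, hM⟩ := (hconv (g n) (g 0)).bddAbove_range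
    exact ⟨M.toNNReal, fun j ↦
      (hν₀ j n).trans_le (ENNReal.ofReal_le_ofReal (hM (mem_range_self j)))⟩
  obtain ⟨μ, hμ⟩ := exists_forall_isClopen_tendsto_measure_of_subset_iUnion (Ultrafilter.of atTop) ν
    (fun n ↦ (isClopen_setOfPred_apply_eq n true).isOpen) hbdd
  let ix := Function.surjInv hg
  refine ⟨ℕ → Bool, inferInstance, μ, fun x ↦ {ω | ω (ix x) = true},
    fun x ↦ (isClopen_setOfPred_apply_eq _ true).isOpen.measurableSet, fun x y ↦ ?_⟩
  have hcover :
      {ω : ℕ → Bool | ω (ix x) = true} ∆ {ω | ω (ix y) = true} ⊆ ⋃ n, {ω | ω n = true} :=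
    fun ω hω ↦ mem_iUnion.2 (hω.elim (fun h ↦ ⟨_, h.1⟩) fun h ↦ ⟨_, h.1⟩)
  refine tendsto_nhds_unique (hμ _ ((isClopen_setOfPred_apply_eq _ true).symmDiff
    (isClopen_setOfPred_apply_eq _ true)) hcover) ?_
  have hlim := (ENNReal.tendsto_ofReal (hconv x y)).mono_left (Ultrafilter.of_le atTop)
  refine hlim.congr fun j ↦ ?_
  rw [hν, Function.surjInv_eq hg, Function.surjInv_eq hg]
end

section
/- On the space Ω of half-spaces of a finite-dimensional real Hilbert space ℋ, there is a Borel measure μ, invariant under the group of rigid motions of ℋ, normalized so that μ{M ∈ Ω : v ∈ M, w ∉ M} = ‖v − w‖ for all v, w ∈ ℋ. -/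
open MeasureTheory
open scoped RealInnerProductSpace ENNReal

/-- The space of (closed affine) half-spaces of a real inner product space. -/
def HalfSpaces (H : Type*) [NormedAddCommGroup H] [InnerProductSpace ℝ H] : Type _ :=
  {M : Set H // ∃ (ξ : H) (t : ℝ), ‖ξ‖ = 1 ∧ M = {u | t ≤ ⟪u, ξ⟫}}

/-!
Parametrize half-spaces by inner unit normal and offset, `(ξ, t) ↦ {u | t ≤ ⟪u, ξ⟫}`, and take
the product of a rotation-invariant finite measure `σ` on the unit sphere (the cone measure of
Lebesgue measure) with Lebesgue measure on `ℝ`. A rigid motion `u ↦ L u + b` acts on parameters by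
`(ξ, t) ↦ (L ξ, t + ⟪b, L ξ⟫)`, a skew product of a `σ`-preserving map with translations of `ℝ`,
so it preserves the product measure. The half-spaces containing `v` but not `w` are those with
`⟪w, ξ⟫ < t ≤ ⟪v, ξ⟫`; they have measure `∫ (⟪v - w, ξ⟫)⁺ dσ(ξ)`, which by rotation invariance
and homogeneity is `‖v - w‖` times a constant in `(0, ∞)`. Dividing by that constant normalizes.
-/

open Set Metric
open scoped Pointwise

noncomputable section

section Sphere

variable {E : Type*} [NormedAddCommGroup E] [NormedSpace ℝ E]

def LinearIsometryEquiv.sphereMap (L : E ≃ₗᵢ[ℝ] E) : sphere (0 : E) 1 → sphere (0 : E) 1 :=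
  fun ξ => ⟨L ξ, by simp⟩

theorem LinearIsometryEquiv.continuous_sphereMap (L : E ≃ₗᵢ[ℝ] E) : Continuous L.sphereMap :=
  (L.continuous.comp continuous_subtype_val).subtype_mk _

theorem LinearIsometryEquiv.smul_image_val_preimage_sphereMap (L : E ≃ₗᵢ[ℝ] E)
    (T : Set ℝ) (s : Set (sphere (0 : E) 1)) :
    T • ((↑) '' (L.sphereMap ⁻¹' s) : Set E) = L ⁻¹' (T • ((↑) '' s)) := by
  ext x
  simp only [mem_smul, mem_image, mem_preimage, sphereMap]
  constructor
  · rintro ⟨a, ha, _, ⟨ξ, hξ, rfl⟩, rfl⟩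
    exact ⟨a, ha, _, ⟨_, hξ, rfl⟩, by simp⟩
  · rintro ⟨a, ha, _, ⟨ξ, hξ, rfl⟩, hx⟩
    refine ⟨a, ha, L.symm ξ, ⟨⟨L.symm ξ, by simp⟩, by simpa using hξ, rfl⟩, ?_⟩
    simpa using congrArg L.symm hx

theorem MeasureTheory.Measure.measurePreserving_sphereMap_toSphere [MeasurableSpace E]
    [BorelSpace E] {μ : Measure E} {L : E ≃ₗᵢ[ℝ] E} (hL : MeasurePreserving L μ μ) :
    MeasurePreserving L.sphereMap μ.toSphere μ.toSphere := by
  refine ⟨L.continuous_sphereMap.measurable, Measure.ext fun s hs => ?_⟩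
  rw [Measure.map_apply L.continuous_sphereMap.measurable hs,
    μ.toSphere_apply' (L.continuous_sphereMap.measurable hs), μ.toSphere_apply' hs,
    L.smul_image_val_preimage_sphereMap]
  exact congrArg _ (hL.measure_preimage_equiv (f := L.toHomeomorph.toMeasurableEquiv) _)

end Sphere

variable {H : Type*} [NormedAddCommGroup H] [InnerProductSpace ℝ H]

section SphereIntegral

variable [MeasurableSpace H] {σ : Measure (sphere (0 : H) 1)}

theorem lintegral_ofReal_inner_lt_top [IsFiniteMeasure σ] (u : H) :
    ∫⁻ ξ, ENNReal.ofReal ⟪u, (ξ : H)⟫ ∂σ < ∞ := by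
  refine (lintegral_mono fun ξ => ENNReal.ofReal_le_ofReal (q := ‖u‖) ?_).trans_lt
    (lintegral_const_lt_top (μ := σ) ENNReal.ofReal_ne_top)
  simpa [norm_eq_of_mem_sphere ξ] using real_inner_le_norm u ξ

variable [OpensMeasurableSpace H]

theorem measurable_ofReal_inner_sphere (u : H) :
    Measurable fun ξ : sphere (0 : H) 1 => ENNReal.ofReal ⟪u, (ξ : H)⟫ := by
  fun_prop

theorem lintegral_ofReal_inner_pos [σ.IsOpenPosMeasure] {u : H} (hu : ‖u‖ = 1) :
    0 < ∫⁻ ξ, ENNReal.ofReal ⟪u, (ξ : H)⟫ ∂σ := by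
  rw [lintegral_pos_iff_support (measurable_ofReal_inner_sphere u)]
  refine IsOpen.measure_pos σ ?_ ⟨⟨u, by simpa using hu⟩, ?_⟩
  · simpa [Function.support] using isOpen_lt continuous_const (by fun_prop)
  · simp [hu]

theorem lintegral_ofReal_inner_eq_norm_mul
    (hσ : ∀ L : H ≃ₗᵢ[ℝ] H, MeasurePreserving L.sphereMap σ σ) {u : H} (hu : ‖u‖ = 1) (y : H) :
    ∫⁻ ξ, ENNReal.ofReal ⟪y, (ξ : H)⟫ ∂σ =
      ENNReal.ofReal ‖y‖ * ∫⁻ ξ, ENNReal.ofReal ⟪u, (ξ : H)⟫ ∂σ := by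
  rcases eq_or_ne y 0 with rfl | hy
  · simp
  set L := (ℝ ∙ (u - ‖y‖⁻¹ • y))ᗮ.reflection
  have hLu : ‖y‖ • L u = y := by
    rw [Submodule.reflection_sub (by simp [norm_smul, hu, hy]),
      smul_inv_smul₀ (norm_ne_zero_iff.2 hy)]
  calc ∫⁻ ξ, ENNReal.ofReal ⟪y, (ξ : H)⟫ ∂σ
      = ∫⁻ ξ, ENNReal.ofReal ‖y‖ * ENNReal.ofReal ⟪L u, (ξ : H)⟫ ∂σ := by
        simp_rw [← ENNReal.ofReal_mul (norm_nonneg y), ← real_inner_smul_left, hLu]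
    _ = ENNReal.ofReal ‖y‖ * ∫⁻ ξ, ENNReal.ofReal ⟪L u, (L.sphereMap ξ : H)⟫ ∂σ := by
        rw [lintegral_const_mul _ (measurable_ofReal_inner_sphere _),
          (hσ L).lintegral_comp (measurable_ofReal_inner_sphere _)]
    _ = ENNReal.ofReal ‖y‖ * ∫⁻ ξ, ENNReal.ofReal ⟪u, (ξ : H)⟫ ∂σ := by
        simp [LinearIsometryEquiv.sphereMap]

end SphereIntegral

theorem exists_lintegral_toSphere_ofReal_inner_eq [FiniteDimensional ℝ H] [MeasurableSpace H]
    [BorelSpace H] :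
    ∃ c : ℝ≥0∞, c ≠ 0 ∧ c ≠ ∞ ∧ ∀ y : H,
      ∫⁻ ξ, ENNReal.ofReal ⟪y, (ξ : H)⟫ ∂(volume : Measure H).toSphere =
        c * ENNReal.ofReal ‖y‖ := by
  rcases subsingleton_or_nontrivial H with _ | _
  · exact ⟨1, one_ne_zero, ENNReal.one_ne_top, fun y => by simp [Subsingleton.elim y 0]⟩
  obtain ⟨u, hu⟩ := exists_norm_eq H zero_le_one
  refine ⟨_, (lintegral_ofReal_inner_pos (σ := (volume : Measure H).toSphere) hu).ne',
    (lintegral_ofReal_inner_lt_top u).ne, fun y => ?_⟩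
  rw [mul_comm, lintegral_ofReal_inner_eq_norm_mul
    (fun L => Measure.measurePreserving_sphereMap_toSphere L.measurePreserving) hu]

theorem eq_and_le_of_setOf_le_inner_subset {ξ η : H} (hξ : ‖ξ‖ = 1) (hη : ‖η‖ = 1) {t s : ℝ}
    (h : {u | t ≤ ⟪u, ξ⟫} ⊆ {u | s ≤ ⟪u, η⟫}) : η = ξ ∧ s ≤ t := by
  set c := ⟪ξ, η⟫
  have hc : c ≤ 1 := by simpa [hξ, hη] using real_inner_le_norm ξ η
  -- the ray from `t • ξ` in direction `ξ - η` stays in the first half-space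
  have key : ∀ r : ℝ, 0 ≤ r → s ≤ t * c - r * (1 - c) := by
    intro r hr
    have hmem : t ≤ ⟪t • ξ + r • (ξ - η), ξ⟫ := by
      simp only [inner_add_left, real_inner_smul_left, inner_sub_left, real_inner_self_eq_norm_sq,
        hξ, real_inner_comm ξ η]
      nlinarith
    have := h hmem
    simp only [mem_ofPred_eq, inner_add_left, real_inner_smul_left, inner_sub_left,
      real_inner_self_eq_norm_sq, hη] at this
    linarith
  have hc1 : c = 1 := by
    by_contra hne
    have hpos : 0 < 1 - c := sub_pos.2 (lt_of_le_of_ne hc hne)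
    have := key ((|t * c - s| + 1) / (1 - c)) (by positivity)
    rw [div_mul_cancel₀ _ hpos.ne'] at this
    linarith [le_abs_self (t * c - s)]
  refine ⟨((inner_eq_one_iff_of_norm_eq_one hξ hη).1 hc1).symm, ?_⟩
  simpa [hc1] using key 0 le_rfl

theorem setOf_le_inner_injective {ξ η : H} (hξ : ‖ξ‖ = 1) (hη : ‖η‖ = 1) {t s : ℝ}
    (h : {u | t ≤ ⟪u, ξ⟫} = {u | s ≤ ⟪u, η⟫}) : ξ = η ∧ t = s :=
  have h₁ := eq_and_le_of_setOf_le_inner_subset hξ hη h.subset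
  have h₂ := eq_and_le_of_setOf_le_inner_subset hη hξ h.symm.subset
  ⟨h₂.1, le_antisymm h₂.2 h₁.2⟩

namespace HalfSpaces

variable (H) in
def ofNormal (p : sphere (0 : H) 1 × ℝ) : HalfSpaces H :=
  ⟨{u | p.2 ≤ ⟪u, p.1⟫}, p.1, p.2, norm_eq_of_mem_sphere p.1, rfl⟩

theorem bijective_ofNormal : Function.Bijective (ofNormal H) := by
  refine ⟨?_, fun ⟨M, ξ, t, hξ, hM⟩ => ⟨(⟨ξ, by simpa using hξ⟩, t), Subtype.ext hM.symm⟩⟩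
  rintro ⟨ξ, t⟩ ⟨η, s⟩ h
  obtain ⟨hξη, rfl⟩ := setOf_le_inner_injective (norm_eq_of_mem_sphere ξ)
    (norm_eq_of_mem_sphere η) (congrArg Subtype.val h)
  rw [Subtype.ext hξη]

def paramMap (φ : H ≃ᵢ H) (p : sphere (0 : H) 1 × ℝ) : sphere (0 : H) 1 × ℝ :=
  (φ.toRealLinearIsometryEquiv.sphereMap p.1, p.2 + ⟪φ 0, φ.toRealLinearIsometryEquiv p.1⟫)

theorem ofNormal_paramMap (φ : H ≃ᵢ H) (p : sphere (0 : H) 1 × ℝ) :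
    (ofNormal H (paramMap φ p)).1 = φ '' (ofNormal H p).1 := by
  set L := φ.toRealLinearIsometryEquiv
  have hinner (u : H) : ⟪φ.symm u, (p.1 : H)⟫ = ⟪u, L p.1⟫ - ⟪φ 0, L p.1⟫ := by
    rw [← L.inner_map_map, ← inner_sub_left]
    simp [L]
  ext u
  rw [← φ.preimage_symm]
  change p.2 + ⟪φ 0, L p.1⟫ ≤ ⟪u, L p.1⟫ ↔ p.2 ≤ ⟪φ.symm u, (p.1 : H)⟫
  rw [hinner]
  constructor <;> intro h <;> linarith

variable [MeasurableSpace H]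

instance : MeasurableSpace (HalfSpaces H) := MeasurableSpace.map (ofNormal H) inferInstance

def measurableEquivOfNormal : sphere (0 : H) 1 × ℝ ≃ᵐ HalfSpaces H where
  toEquiv := Equiv.ofBijective _ bijective_ofNormal
  measurable_toFun _ hs := hs
  measurable_invFun s hs := by
    change MeasurableSet ((Equiv.ofBijective _ bijective_ofNormal) ⁻¹'
      ((Equiv.ofBijective _ bijective_ofNormal).symm ⁻¹' s))
    rwa [Equiv.preimage_symm_preimage]

@[simp]
theorem coe_measurableEquivOfNormal :
    ⇑(measurableEquivOfNormal (H := H)) = ofNormal H := rfl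

def prodMeasure (σ : Measure (sphere (0 : H) 1)) : Measure (HalfSpaces H) :=
  (σ.prod volume).map measurableEquivOfNormal

variable [OpensMeasurableSpace H]

theorem measurableSet_setOf_mem (v : H) : MeasurableSet {M : HalfSpaces H | v ∈ M.1} :=
  measurableSet_le measurable_snd (by fun_prop)

theorem measurePreserving_paramMap {σ : Measure (sphere (0 : H) 1)} [SFinite σ] (φ : H ≃ᵢ H)
    (hσ : MeasurePreserving φ.toRealLinearIsometryEquiv.sphereMap σ σ) :
    MeasurePreserving (paramMap φ) (σ.prod volume) (σ.prod volume) :=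
  hσ.skew_product (g := fun ξ t => t + ⟪φ 0, φ.toRealLinearIsometryEquiv ξ⟫) (by fun_prop)
    (.of_forall fun _ => map_add_right_eq_self volume _)

theorem prodMeasure_setOf_image_mem {σ : Measure (sphere (0 : H) 1)} [SFinite σ] (φ : H ≃ᵢ H)
    (hσ : MeasurePreserving φ.toRealLinearIsometryEquiv.sphereMap σ σ)
    {A : Set (HalfSpaces H)} (hA : MeasurableSet A) :
    prodMeasure σ {M | φ '' M.1 ∈ Subtype.val '' A} = prodMeasure σ A := by
  have hpre : ofNormal H ⁻¹' {M | φ '' M.1 ∈ Subtype.val '' A} =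
      paramMap φ ⁻¹' (ofNormal H ⁻¹' A) := by
    ext p
    simp only [mem_preimage, mem_ofPred_eq, ← ofNormal_paramMap]
    exact Subtype.val_injective.mem_set_image
  rw [prodMeasure, MeasurableEquiv.map_apply, MeasurableEquiv.map_apply,
    coe_measurableEquivOfNormal, hpre]
  exact (measurePreserving_paramMap φ hσ).measure_preimage
    (measurableEquivOfNormal.measurable hA).nullMeasurableSet

theorem prodMeasure_setOf_mem_not_mem (σ : Measure (sphere (0 : H) 1)) [SFinite σ] (v w : H) :
    prodMeasure σ {M | v ∈ M.1 ∧ w ∉ M.1} = ∫⁻ ξ, ENNReal.ofReal ⟪v - w, (ξ : H)⟫ ∂σ := by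
  have hm : MeasurableSet {M : HalfSpaces H | v ∈ M.1 ∧ w ∉ M.1} :=
    (measurableSet_setOf_mem v).inter (measurableSet_setOf_mem w).compl
  rw [prodMeasure, MeasurableEquiv.map_apply,
    Measure.prod_apply (measurableEquivOfNormal.measurable hm)]
  refine lintegral_congr fun ξ => ?_
  have hslice : Prod.mk ξ ⁻¹' (measurableEquivOfNormal ⁻¹' {M | v ∈ M.1 ∧ w ∉ M.1}) =
      Ioc ⟪w, (ξ : H)⟫ ⟪v, (ξ : H)⟫ := by
    ext t
    simp [ofNormal, and_comm]
  rw [hslice, Real.volume_Ioc, inner_sub_left]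

end HalfSpaces

end

theorem exists_invariant_halfspace_measure_general (H : Type*) [NormedAddCommGroup H]
    [InnerProductSpace ℝ H] [FiniteDimensional ℝ H] :
    ∃ (m : MeasurableSpace (HalfSpaces H)) (μ : Measure (HalfSpaces H)),
      (∀ v : H, MeasurableSet {M : HalfSpaces H | v ∈ M.1}) ∧
      (∀ (φ : H ≃ᵢ H) (A : Set (HalfSpaces H)), MeasurableSet A →
        μ {M : HalfSpaces H | ⇑φ '' M.1 ∈ Subtype.val '' A} = μ A) ∧
      (∀ v w : H, μ {M : HalfSpaces H | v ∈ M.1 ∧ w ∉ M.1} = ENNReal.ofReal ‖v - w‖) := by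
  borelize H
  obtain ⟨c, hc0, hctop, hc⟩ := exists_lintegral_toSphere_ofReal_inner_eq (H := H)
  refine ⟨inferInstance, c⁻¹ • HalfSpaces.prodMeasure (volume : Measure H).toSphere,
    HalfSpaces.measurableSet_setOf_mem, fun φ A hA => ?_, fun v w => ?_⟩
  · rw [Measure.smul_apply, Measure.smul_apply, HalfSpaces.prodMeasure_setOf_image_mem φ
      (Measure.measurePreserving_sphereMap_toSphere (LinearIsometryEquiv.measurePreserving _)) hA]
  · rw [Measure.smul_apply, HalfSpaces.prodMeasure_setOf_mem_not_mem, hc, smul_eq_mul,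
      ← mul_assoc, ENNReal.inv_mul_cancel hc0 hctop, one_mul]

/-- On the space of half-spaces of a finite-dimensional real Hilbert space
there is a measure, invariant under all rigid motions, normalized so that
`μ {M : v ∈ M, w ∉ M} = ‖v - w‖`. -/
theorem exists_invariant_halfspace_measure (H : Type*) [NormedAddCommGroup H]
    [InnerProductSpace ℝ H] [FiniteDimensional ℝ H] (hd : 1 ≤ Module.finrank ℝ H) :
    ∃ (m : MeasurableSpace (HalfSpaces H)) (μ : Measure (HalfSpaces H)),
      (∀ v : H, MeasurableSet {M : HalfSpaces H | v ∈ M.1}) ∧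
      (∀ (φ : H ≃ᵢ H) (A : Set (HalfSpaces H)), MeasurableSet A →
        μ {M : HalfSpaces H | ⇑φ '' M.1 ∈ Subtype.val '' A} = μ A) ∧
      (∀ v w : H, μ {M : HalfSpaces H | v ∈ M.1 ∧ w ∉ M.1} = ENNReal.ofReal ‖v - w‖) :=
  exists_invariant_halfspace_measure_general H
end

section
/- The distance function d on the four-vertex star tree (center 4 adjacent to leaves 1, 2, 3), with d(i,4)=1 and d(i,j)=2 for distinct leaves i,j, is measure definite, but d² is not negative definite; equivalently, there are no vectors v_1,v_2,v_3,v_4 in a real Hilbert space with ‖v_i − v_j‖ = d(i,j) for all i,j. -/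
/-!
Send each leaf `i` to the singleton `{i}` and the center to `∅`; under counting measure the
symmetric differences have exactly the sizes prescribed by `starDist`, so it is measure definite.

It is not Hilbertian: in a strictly convex space a point at distance `1` from two points at
distance `2` is their midpoint, so the center would be the midpoint of leaves `0, 1` and of
leaves `0, 2`, forcing leaves `1` and `2` to coincide. Correspondingly, the weights
`(1, 1, 1, -3)` have sum `0` but give the quadratic form of `starDist ^ 2` the value `6 > 0`.
-/

open MeasureTheory
open scoped symmDiff

/-- The distance on the four-vertex star tree: vertex `3` is the center. -/
noncomputable def starDist (i j : Fin 4) : ℝ :=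
  if i = j then 0 else if i = 3 ∨ j = 3 then 1 else 2

theorem isMeasureDefinite_card_symmDiff {Γ : Type*} {α : Type} [DecidableEq α]
    (S : Γ → Finset α) : IsMeasureDefinite fun x y => ((S x ∆ S y).card : ℝ) := by
  let : MeasurableSpace α := ⊤
  refine ⟨fun _ _ => Nat.cast_nonneg _, α, ⊤, Measure.count, fun x => S x,
    fun _ => MeasurableSpace.measurableSet_top, fun x y => ?_⟩
  rw [← Finset.coe_symmDiff, Measure.count_apply_finset, ENNReal.ofReal_natCast]

theorem starDist_eq_card_symmDiff (i j : Fin 4) :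
    starDist i j = (({i} : Finset (Fin 4)).erase 3 ∆ ({j} : Finset (Fin 4)).erase 3).card := by
  have hcard : (({i} : Finset (Fin 4)).erase 3 ∆ ({j} : Finset (Fin 4)).erase 3).card =
      if i = j then 0 else if i = 3 ∨ j = 3 then 1 else 2 := by
    revert i j; decide
  rw [starDist, hcard]
  split_ifs <;> norm_num

theorem isMeasureDefinite_starDist : IsMeasureDefinite starDist := by
  rw [show starDist = _ from funext₂ starDist_eq_card_symmDiff]
  exact isMeasureDefinite_card_symmDiff fun i : Fin 4 => ({i} : Finset (Fin 4)).erase 3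

theorem exists_sum_eq_zero_and_starDist_sq_form_pos :
    ∃ c : Fin 4 → ℝ, ∑ i, c i = 0 ∧ 0 < ∑ i, ∑ j, c i * c j * starDist i j ^ 2 := by
  refine ⟨![1, 1, 1, -3], ?_, ?_⟩ <;> simp [Fin.sum_univ_four, starDist] <;> norm_num

theorem not_forall_norm_sub_eq_starDist {E : Type*} [NormedAddCommGroup E] [NormedSpace ℝ E]
    [StrictConvexSpace ℝ E] (v : Fin 4 → E) : ¬ ∀ i j, ‖v i - v j‖ = starDist i j := by
  intro hv
  have hdist : ∀ i j, dist (v i) (v j) = starDist i j := fun i j =>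
    (dist_eq_norm _ _).trans (hv i j)
  have hmid : ∀ j : Fin 4, j = 1 ∨ j = 2 → midpoint ℝ (v 0) (v j) = v 3 := by
    rintro j (rfl | rfl) <;>
      exact (eq_midpoint_of_dist_eq_half (by simp [hdist, starDist])
        (by simp [hdist, starDist])).symm
  have h12 : v 1 = v 2 := by
    rw [← midpoint_eq_iff.1 (hmid 1 (.inl rfl)), ← midpoint_eq_iff.1 (hmid 2 (.inr rfl))]
  simpa [h12, starDist] using hv 1 2

/-- `starDist` is measure definite, but its square is not negative
definite; equivalently, no vectors in a real Hilbert space realize these distances. -/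
theorem star_tree_dist_measure_definite_sq_not_negdef :
    IsMeasureDefinite starDist ∧
    ¬ (∀ (n : ℕ) (x : Fin n → Fin 4) (c : Fin n → ℝ), (∑ i, c i = 0) →
        ∑ i, ∑ j, c i * c j * (starDist (x i) (x j)) ^ 2 ≤ 0) ∧
    (∀ (E : Type) (_ : NormedAddCommGroup E), ∀ _ : InnerProductSpace ℝ E,
      ∀ v : Fin 4 → E, ¬ (∀ i j, ‖v i - v j‖ = starDist i j)) := by
  refine ⟨isMeasureDefinite_starDist, fun h => ?_,
    fun E _ _ v => not_forall_norm_sub_eq_starDist v⟩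
  obtain ⟨c, hc, hpos⟩ := exists_sum_eq_zero_and_starDist_sq_form_pos
  exact (h 4 id c hc).not_gt hpos
end

section
/- If a countable group Γ has Kazhdan property (T), then for every measure-preserving action of Γ on a measure space (Ω,𝓑,μ) and every S ∈ 𝓑 with μ(S △ gS) < ∞ for all g ∈ Γ, one has sup_{g∈Γ} μ(S △ gS) < ∞. -/
open MeasureTheory
open scoped symmDiff ENNReal

/-! The proof is Delorme–Guichardet applied to the kernel `(x, y) ↦ μ(xS ∆ yS)`, which is
left-invariant because the action preserves `μ`. It is negative definite because it is the
squared distance of an embedding of `Γ` into `L²(μ)`: `x ↦ 1_{xS} - 1_S` has finite norm since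
`μ(xS ∆ S) < ∞`, and `‖(1_{xS} - 1_S) - (1_{yS} - 1_S)‖² = μ(xS ∆ yS)`. -/

/-- Property (T) via the Delorme–Guichardet characterization: every left-invariant
(normalized, symmetric) negative definite kernel on the group is bounded. -/
def HasPropertyT (Γ : Type*) [Group Γ] : Prop :=
  ∀ f : Γ → Γ → ℝ,
    (∀ x y, 0 ≤ f x y) →
    (∀ g x y, f (g * x) (g * y) = f x y) →
    (∀ x, f x x = 0) →
    (∀ x y, f x y = f y x) →
    (∀ (n : ℕ) (x : Fin n → Γ) (c : Fin n → ℝ), (∑ i, c i = 0) →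
      ∑ i, ∑ j, c i * c j * f (x i) (x j) ≤ 0) →
    ∃ C : ℝ, ∀ x y, f x y ≤ C

theorem sum_sum_mul_mul_norm_sub_sq_nonpos {ι F : Type*} [NormedAddCommGroup F]
    [InnerProductSpace ℝ F] (s : Finset ι) (v : ι → F) {c : ι → ℝ} (hc : ∑ i ∈ s, c i = 0) :
    ∑ i ∈ s, ∑ j ∈ s, c i * c j * ‖v i - v j‖ ^ 2 ≤ 0 := by
  have h := inner_sum_smul_sum_smul_of_sum_eq_zero v hc v hc
  rw [real_inner_self_eq_norm_sq] at h
  simp only [← sq] at h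
  linarith [sq_nonneg ‖∑ i ∈ s, c i • v i‖]

section IndicatorLp

variable {α E : Type*} [MeasurableSpace α] {μ : Measure α} [NormedAddCommGroup E]
  {s t u : Set α}

theorem memLp_indicator_sub_indicator (p : ℝ≥0∞) (hs : MeasurableSet s) (ht : MeasurableSet t)
    (hst : μ (s ∆ t) ≠ ∞) (c : E) :
    MemLp (s.indicator (fun _ ↦ c) - t.indicator fun _ ↦ c) p μ := by
  refine ⟨(aestronglyMeasurable_const.indicator hs).sub
    (aestronglyMeasurable_const.indicator ht), ?_⟩
  rw [eLpNorm_indicator_sub_indicator]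
  exact (memLp_indicator_const p (hs.symmDiff ht) c (Or.inr hst)).eLpNorm_lt_top

theorem norm_toLp_indicator_sub_toLp_indicator_sq (hs : MeasurableSet s) (ht : MeasurableSet t)
    (hu : MeasurableSet u) (hsu : μ (s ∆ u) ≠ ∞) (htu : μ (t ∆ u) ≠ ∞) :
    ‖(memLp_indicator_sub_indicator 2 hs hu hsu (1 : ℝ)).toLp _
        - (memLp_indicator_sub_indicator 2 ht hu htu (1 : ℝ)).toLp _‖ ^ 2 = μ.real (s ∆ t) := by
  rw [← MemLp.toLp_sub, Lp.norm_toLp, sub_sub_sub_cancel_right, eLpNorm_indicator_sub_indicator,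
    eLpNorm_indicator_const (hs.symmDiff ht) two_ne_zero ENNReal.ofNat_ne_top,
    enorm_one, one_mul, ← ENNReal.toReal_rpow, ENNReal.toReal_ofNat, ← Real.sqrt_eq_rpow,
    Real.sq_sqrt ENNReal.toReal_nonneg, measureReal_def]

theorem sum_sum_mul_mul_measureReal_symmDiff_nonpos_s17 {ι : Type*} (I : Finset ι) {A : ι → Set α}
    (hA : ∀ i, MeasurableSet (A i)) (hu : MeasurableSet u) (hAu : ∀ i, μ (A i ∆ u) ≠ ∞)
    {c : ι → ℝ} (hc : ∑ i ∈ I, c i = 0) :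
    ∑ i ∈ I, ∑ j ∈ I, c i * c j * μ.real (A i ∆ A j) ≤ 0 := by
  simp only [← norm_toLp_indicator_sub_toLp_indicator_sq (hA _) (hA _) hu (hAu _) (hAu _)]
  exact sum_sum_mul_mul_norm_sub_sq_nonpos I _ hc

end IndicatorLp

open scoped Pointwise

theorem HasPropertyT.exists_measure_symmDiff_smul_le {Γ α : Type*} [Group Γ] [MeasurableSpace α]
    [MulAction Γ α] [MeasurableConstSMul Γ α] {μ : Measure α} [SMulInvariantMeasure Γ α μ]
    (hT : HasPropertyT Γ) {S : Set α} (hS : MeasurableSet S)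
    (hfin : ∀ g : Γ, μ (S ∆ (g • S)) ≠ ∞) :
    ∃ C : ℝ≥0∞, C ≠ ∞ ∧ ∀ g : Γ, μ (S ∆ (g • S)) ≤ C := by
  obtain ⟨C, hC⟩ := hT (fun x y ↦ μ.real ((x • S) ∆ (y • S)))
    (fun _ _ ↦ measureReal_nonneg)
    (fun g x y ↦ by simp only [mul_smul, ← Set.smul_set_symmDiff, measureReal_def, measure_smul])
    (fun _ ↦ by simp)
    (fun _ _ ↦ by rw [symmDiff_comm])
    (fun _ x _ hc ↦ sum_sum_mul_mul_measureReal_symmDiff_nonpos_s17 Finset.univ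
      (fun i ↦ hS.const_smul (x i)) hS (fun i ↦ symmDiff_comm S (x i • S) ▸ hfin (x i)) hc)
  refine ⟨ENNReal.ofReal C, ENNReal.ofReal_ne_top, fun g ↦ ?_⟩
  rw [← ofReal_measureReal (hfin g)]
  exact ENNReal.ofReal_le_ofReal (by simpa using hC 1 g)

theorem propertyT_implies_uniform_bound_general (Γ : Type*) [Group Γ]
    (hT : HasPropertyT Γ) :
    ∀ (Ω : Type) (_ : MeasurableSpace Ω) (μ : Measure Ω) (a : Γ → Ω → Ω),
      (∀ ω, a 1 ω = ω) →
      (∀ g h ω, a (g * h) ω = a g (a h ω)) →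
      (∀ g, MeasurePreserving (a g) μ μ) →
      ∀ S : Set Ω, MeasurableSet S →
      (∀ g, μ (S ∆ (a g '' S)) ≠ ⊤) →
      ∃ C : ℝ≥0∞, C ≠ ⊤ ∧ ∀ g, μ (S ∆ (a g '' S)) ≤ C := by
  intro Ω _ μ a h_one h_mul hmp S hS hfin
  let : MulAction Γ Ω := { smul := a, one_smul := h_one, mul_smul := h_mul }
  have : MeasurableConstSMul Γ Ω := ⟨fun g ↦ (hmp g).measurable⟩
  have : SMulInvariantMeasure Γ Ω μ :=
    ⟨fun g _ hs ↦ (hmp g).measure_preimage hs.nullMeasurableSet⟩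
  -- `g • S` unfolds to `a g '' S` for this action.
  exact hT.exists_measure_symmDiff_smul_le hS hfin

/-- If a countable group has property (T), then for every measure-preserving
action on a measure space and every set `S` with `μ(S ∆ gS) < ∞` for all `g`, the quantities
`μ(S ∆ gS)` are uniformly bounded. -/
theorem propertyT_implies_uniform_bound (Γ : Type*) [Group Γ] [Countable Γ]
    (hT : HasPropertyT Γ) :
    ∀ (Ω : Type) (_ : MeasurableSpace Ω) (μ : Measure Ω) (a : Γ → Ω → Ω),
      (∀ ω, a 1 ω = ω) →
      (∀ g h ω, a (g * h) ω = a g (a h ω)) →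
      (∀ g, MeasurePreserving (a g) μ μ) →
      ∀ S : Set Ω, MeasurableSet S →
      (∀ g, μ (S ∆ (a g '' S)) ≠ ⊤) →
      ∃ C : ℝ≥0∞, C ≠ ⊤ ∧ ∀ g, μ (S ∆ (a g '' S)) ≤ C :=
  propertyT_implies_uniform_bound_general Γ hT
end
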